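/- arXiv:1002.0910 — 13 statements merged into one kernel-verified Lean document; each statement's English description precedes it below -/
import Mathlib

section
/- In a weakly dicomplemented lattice, (x ∧ y)^△ = x^△ ∨ y^△ for all x, y. -/
/-- Weakly dicomplemented lattice: bounded lattice with weak complementation
`tri` and dual weak complementation `dtri` satisfying axioms (1)-(3), (1')-(3'). -/
theorem stmt_3 {L : Type*} [Lattice L] [BoundedOrder L]
    (tri dtri : L → L)
    (h1 : ∀ x : L, tri (tri x) ≤ x)
    (h2 : ∀ x y : L, x ≤ y → tri y ≤ tri x)
    (h3 : ∀ x y : L, (x ⊓ y) ⊔ (x ⊓ tri y) = x)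
    (h1' : ∀ x : L, x ≤ dtri (dtri x))
    (h2' : ∀ x y : L, x ≤ y → dtri y ≤ dtri x)
    (h3' : ∀ x y : L, (x ⊔ y) ⊓ (x ⊔ dtri y) = x) :
    ∀ x y : L, tri (x ⊓ y) = tri x ⊔ tri y := by
  intro x y
  apply le_antisymm
  · have hx : tri (tri x ⊔ tri y) ≤ x :=
      le_trans (h2 _ _ le_sup_left) (h1 x)
    have hy : tri (tri x ⊔ tri y) ≤ y :=
      le_trans (h2 _ _ le_sup_right) (h1 y)
    exact le_trans (h2 _ _ (le_inf hx hy)) (h1 _)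
  · exact sup_le (h2 _ _ inf_le_left) (h2 _ _ inf_le_right)
end

section
/- In a weakly dicomplemented lattice, (x ∨ y)^▽ = x^▽ ∧ y^▽ for all x, y. -/
/-- Weakly dicomplemented lattice: bounded lattice with weak complementation
`tri` and dual weak complementation `dtri` satisfying axioms (1)-(3), (1')-(3'). -/
theorem stmt_4 {L : Type*} [Lattice L] [BoundedOrder L]
    (tri dtri : L → L)
    (h1 : ∀ x : L, tri (tri x) ≤ x)
    (h2 : ∀ x y : L, x ≤ y → tri y ≤ tri x)
    (h3 : ∀ x y : L, (x ⊓ y) ⊔ (x ⊓ tri y) = x)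
    (h1' : ∀ x : L, x ≤ dtri (dtri x))
    (h2' : ∀ x y : L, x ≤ y → dtri y ≤ dtri x)
    (h3' : ∀ x y : L, (x ⊔ y) ⊓ (x ⊔ dtri y) = x) :
    ∀ x y : L, dtri (x ⊔ y) = dtri x ⊓ dtri y := by
  intro x y
  apply le_antisymm
  · exact le_inf (h2' _ _ le_sup_left) (h2' _ _ le_sup_right)
  · have hx : x ≤ dtri (dtri x ⊓ dtri y) :=
      (h1' x).trans (h2' _ _ inf_le_left)
    have hy : y ≤ dtri (dtri x ⊓ dtri y) :=
      (h1' y).trans (h2' _ _ inf_le_right)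
    exact (h1' _).trans (h2' _ _ (sup_le hx hy))
end

section
/- Let L be a nonempty lattice with a unary operation ^△ satisfying: x^△^△ ≤ x; x ≤ y implies x^△ ≥ y^△; and (x∧y)∨(x∧y^△) = x for all x,y. Then L is bounded: for any fixed a ∈ L, the element a ∨ a^△ is the greatest element of L and (a ∨ a^△)^△ is the least element of L. -/
/-- A nonempty lattice with a unary operation satisfying the weak complementation
axioms is bounded: `a ⊔ tri a` is the greatest element and `tri (a ⊔ tri a)`
the least element, for any fixed `a`. -/
theorem stmt_7 {L : Type*} [Lattice L] [Nonempty L]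
    (tri : L → L)
    (h1 : ∀ x : L, tri (tri x) ≤ x)
    (h2 : ∀ x y : L, x ≤ y → tri y ≤ tri x)
    (h3 : ∀ x y : L, (x ⊓ y) ⊔ (x ⊓ tri y) = x) :
    ∀ a y : L, y ≤ a ⊔ tri a ∧ tri (a ⊔ tri a) ≤ y := by
  intro a y
  have top : ∀ z : L, z ≤ a ⊔ tri a := by
    intro z
    have := h3 z a
    calc z = (z ⊓ a) ⊔ (z ⊓ tri a) := this.symm
    _ ≤ a ⊔ tri a := sup_le_sup inf_le_right inf_le_right
  refine ⟨top y, ?_⟩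
  calc tri (a ⊔ tri a) ≤ tri (tri y) := h2 _ _ (top (tri y))
  _ ≤ y := h1 y
end

section
/- Let h be a closure operator on a set X. On the lattice of closed sets hP(X) (with meet = intersection, join A₁ ∨ʰ A₂ = h(A₁ ∪ A₂), bottom h(∅), top X), define A^△ := h(X \ A). Then the operation ^△ satisfies: A^△^△ ⊆ A; A₁ ⊆ A₂ implies A₁^△ ⊇ A₂^△; and (A ∧ B) ∨ʰ (A ∧ B^△) = A for all closed sets A, B. That is, hP(X) is a weakly complemented lattice. -/
/-- For a closure operator `h` on a set `X`, the lattice of closed sets with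
`A^△ := h(X \ A)` is a weakly complemented lattice. -/
theorem stmt_8 {X : Type*} (h : Set X → Set X)
    (hext : ∀ A : Set X, A ⊆ h A)
    (hmono : ∀ A B : Set X, A ⊆ B → h A ⊆ h B)
    (hidem : ∀ A : Set X, h (h A) = h A) :
    (∀ A : Set X, h A = A → h (h Aᶜ)ᶜ ⊆ A) ∧
    (∀ A₁ A₂ : Set X, h A₁ = A₁ → h A₂ = A₂ → A₁ ⊆ A₂ → h A₂ᶜ ⊆ h A₁ᶜ) ∧
    (∀ A B : Set X, h A = A → h B = B → h ((A ∩ B) ∪ (A ∩ h Bᶜ)) = A) := by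
  refine ⟨?_, ?_, ?_⟩
  · intro A hA
    have : (h Aᶜ)ᶜ ⊆ A := by
      have := hext Aᶜ
      intro x hx
      by_contra hxA
      exact hx (this hxA)
    calc h (h Aᶜ)ᶜ ⊆ h A := hmono _ _ this
      _ = A := hA
  · intro A₁ A₂ _ _ hle
    exact hmono _ _ (Set.compl_subset_compl.mpr hle)
  · intro A B hA hB
    apply subset_antisymm
    · have : (A ∩ B) ∪ (A ∩ h Bᶜ) ⊆ A := by
        intro x hx; rcases hx with hx | hx <;> exact hx.1
      calc h ((A ∩ B) ∪ (A ∩ h Bᶜ)) ⊆ h A := hmono _ _ this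
        _ = A := hA
    · intro x hx
      apply hext
      by_cases hxB : x ∈ B
      · exact Or.inl ⟨hx, hxB⟩
      · exact Or.inr ⟨hx, hext Bᶜ hxB⟩
end

section
/- Let k be a kernel operator on a set Y. On the lattice of open (kernel-fixed) sets kP(Y) (with join = union, meet B₁ ∧ₖ B₂ = k(B₁ ∩ B₂), bottom ∅, top k(Y)), define B^▽ := k(Y \ B). Then: B^▽^▽ ⊇ B; B₁ ⊆ B₂ implies B₁^▽ ⊇ B₂^▽; and (A ∨ B) ∧ₖ (A ∨ B^▽) = A for all such A, B. That is, kP(Y) is a dual weakly complemented lattice. -/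
/-- For a kernel operator `k` on a set `Y`, the lattice of kernel-fixed sets with
`B^▽ := k(Y \ B)` is a dual weakly complemented lattice. -/
theorem stmt_9 {Y : Type*} (k : Set Y → Set Y)
    (hcon : ∀ B : Set Y, k B ⊆ B)
    (hmono : ∀ A B : Set Y, A ⊆ B → k A ⊆ k B)
    (hidem : ∀ B : Set Y, k (k B) = k B) :
    (∀ B : Set Y, k B = B → B ⊆ k (k Bᶜ)ᶜ) ∧
    (∀ B₁ B₂ : Set Y, k B₁ = B₁ → k B₂ = B₂ → B₁ ⊆ B₂ → k B₂ᶜ ⊆ k B₁ᶜ) ∧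
    (∀ A B : Set Y, k A = A → k B = B → k ((A ∪ B) ∩ (A ∪ k Bᶜ)) = A) := by
  refine ⟨?_, ?_, ?_⟩
  · intro B hB
    have h1 : B ⊆ (k Bᶜ)ᶜ := by
      intro x hx hx'
      exact (hcon Bᶜ hx') hx
    calc B = k B := hB.symm
      _ ⊆ k (k Bᶜ)ᶜ := hmono _ _ h1
  · intro B₁ B₂ _ _ h
    exact hmono _ _ (Set.compl_subset_compl.mpr h)
  · intro A B hA _
    have : (A ∪ B) ∩ (A ∪ k Bᶜ) = A := by
      rw [← Set.union_inter_distrib_left]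
      have : B ∩ k Bᶜ = ∅ := by
        apply Set.eq_empty_of_subset_empty
        intro x ⟨hx, hx'⟩
        exact (hcon Bᶜ hx') hx
      rw [this, Set.union_empty]
    rw [this, hA]
end

section
/- Let L be a finite lattice, G a set of elements containing all join-irreducible elements of L, and H a set containing all meet-irreducible elements of L. Define x^△ := ⋁{a ∈ G | a ≰ x} and x^▽ := ⋀{m ∈ H | m ≱ x}. Then (L, ∧, ∨, ^△, ^▽, 0, 1) is a weakly dicomplemented lattice. -/
/-- Let `L` be a finite (complete, bounded) lattice, `G ⊇ J(L)` and `H ⊇ M(L)`.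
Then `x^△ := ⨆ {a ∈ G | a ≤ x}` and `x^▽ := ⨅ {m ∈ H | m ≥ x}` give a weakly
dicomplemented lattice structure on `L`. -/
theorem stmt_10 {L : Type*} [Fintype L] [CompleteLattice L]
    (G H : Set L)
    (hG : ∀ a : L, SupIrred a → a ∈ G)
    (hH : ∀ m : L, InfIrred m → m ∈ H)
    (tri : L → L) (dtri : L → L)
    (htri : ∀ x : L, tri x = sSup {a | a ∈ G ∧ ¬ a ≤ x})
    (hdtri : ∀ x : L, dtri x = sInf {m | m ∈ H ∧ ¬ x ≤ m}) :
    (∀ x : L, tri (tri x) ≤ x) ∧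
    (∀ x y : L, x ≤ y → tri y ≤ tri x) ∧
    (∀ x y : L, (x ⊓ y) ⊔ (x ⊓ tri y) = x) ∧
    (∀ x : L, x ≤ dtri (dtri x)) ∧
    (∀ x y : L, x ≤ y → dtri y ≤ dtri x) ∧
    (∀ x y : L, (x ⊔ y) ⊓ (x ⊔ dtri y) = x) := by
  have key : ∀ a ∈ G, ∀ x : L, ¬ a ≤ x → a ≤ tri x := by
    intro a haG x hax
    rw [htri]
    exact le_sSup ⟨haG, hax⟩
  have dkey : ∀ m ∈ H, ∀ x : L, ¬ x ≤ m → dtri x ≤ m := by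
    intro m hmH x hxm
    rw [hdtri]
    exact sInf_le ⟨hmH, hxm⟩
  refine ⟨?_, ?_, ?_, ?_, ?_, ?_⟩
  · intro x
    rw [htri (tri x)]
    refine sSup_le fun a ⟨haG, ha⟩ => ?_
    by_contra hax
    exact ha (key a haG x hax)
  · intro x y hxy
    rw [htri, htri]
    exact sSup_le_sSup fun a ⟨haG, ha⟩ => ⟨haG, fun h => ha (h.trans hxy)⟩
  · intro x y
    refine le_antisymm (sup_le inf_le_left inf_le_left) ?_
    obtain ⟨s, hs, hirr⟩ := exists_supIrred_decomposition x
    conv_lhs => rw [← hs]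
    refine Finset.sup_le fun a ha => ?_
    have hax : a ≤ x := hs ▸ Finset.le_sup (f := id) ha
    by_cases hay : a ≤ y
    · exact le_sup_of_le_left (le_inf hax hay)
    · exact le_sup_of_le_right (le_inf hax (key a (hG a (hirr ha)) y hay))
  · intro x
    rw [hdtri (dtri x)]
    refine le_sInf fun m ⟨hmH, hm⟩ => ?_
    by_contra hxm
    exact hm (dkey m hmH x hxm)
  · intro x y hxy
    rw [hdtri, hdtri]
    exact sInf_le_sInf fun m ⟨hmH, hm⟩ => ⟨hmH, fun h => hm (hxy.trans h)⟩
  · intro x y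
    refine le_antisymm ?_ (le_inf le_sup_left le_sup_left)
    obtain ⟨s, hs, hirr⟩ := exists_infIrred_decomposition x
    conv_rhs => rw [← hs]
    refine Finset.le_inf fun m hm => ?_
    have hxm : x ≤ m := hs ▸ Finset.inf_le (f := id) hm
    by_cases hym : y ≤ m
    · exact inf_le_of_left_le (sup_le hxm hym)
    · exact inf_le_of_right_le (sup_le hxm (dkey m (hH m (hirr hm)) y hym))
end

section
/- A weakly dicomplemented lattice with negation (i.e., one in which x^△ = x^▽ for all x) is a uniquely complemented lattice, with x̄ := x^△ the unique complement of x, and moreover x̄̄ = x. -/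
/-- A weakly dicomplemented lattice with negation (tri = dtri) is uniquely
complemented, with `tri x` the unique complement of `x`, and `tri (tri x) = x`. -/
theorem stmt_11 {L : Type*} [Lattice L] [BoundedOrder L]
    (tri dtri : L → L)
    (h1 : ∀ x : L, tri (tri x) ≤ x)
    (h2 : ∀ x y : L, x ≤ y → tri y ≤ tri x)
    (h3 : ∀ x y : L, (x ⊓ y) ⊔ (x ⊓ tri y) = x)
    (h1' : ∀ x : L, x ≤ dtri (dtri x))
    (h2' : ∀ x y : L, x ≤ y → dtri y ≤ dtri x)
    (h3' : ∀ x y : L, (x ⊔ y) ⊓ (x ⊔ dtri y) = x)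
    (hneg : ∀ x : L, tri x = dtri x) :
    ∀ x : L, IsCompl x (tri x) ∧ (∀ y : L, IsCompl x y → y = tri x) ∧
      tri (tri x) = x := by
  -- x ⊓ tri x = ⊥
  have hbot : ∀ x : L, x ⊓ tri x = ⊥ := by
    intro x
    have := h3' ⊥ x
    simp only [bot_sup_eq] at this
    rw [hneg, this]
  -- x ⊔ tri x = ⊤
  have htop : ∀ x : L, x ⊔ tri x = ⊤ := by
    intro x
    have := h3 ⊤ x
    simp only [top_inf_eq] at this
    exact this
  intro x
  refine ⟨⟨disjoint_iff.2 (hbot x), codisjoint_iff.2 (htop x)⟩, ?_, ?_⟩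
  · intro y hy
    have hd : y ⊓ x = ⊥ := by
      have := hy.disjoint.eq_bot; rwa [inf_comm]
    have hc : y ⊔ x = ⊤ := by
      have := hy.codisjoint.eq_top; rwa [sup_comm]
    have hle : y ≤ tri x := by
      have := h3 y x
      rw [hd, bot_sup_eq] at this
      exact this ▸ inf_le_right
    have hge : tri x ≤ y := by
      have := h3' y x
      rw [hc, top_inf_eq, ← hneg] at this
      exact sup_eq_left.mp this
    exact le_antisymm hle hge
  · refine le_antisymm (h1 x) ?_
    have := h1' x
    rwa [← hneg, ← hneg] at this
end

section
/- A weakly dicomplemented lattice with negation satisfies the de Morgan laws: (x ∧ y)‾ = x̄ ∨ ȳ and (x ∨ y)‾ = x̄ ∧ ȳ, where x̄ denotes the common value x^△ = x^▽. -/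
/-! Since `x̄̄ ≤ x` holds for `△` and `x ≤ x̄̄` for `▽`, a negation is an antitone involution,
i.e. an order isomorphism onto the order dual, and such maps exchange `⊓` and `⊔`. -/

open Function

namespace Antitone

variable {α : Type*} [Lattice α] {f : α → α}

def orderIsoDualOfInvolutive (hf : Antitone f) (hinv : Involutive f) : α ≃o αᵒᵈ where
  toEquiv := hinv.toPerm.trans OrderDual.toDual
  map_rel_iff' {a b} :=
    ⟨fun (h : f b ≤ f a) => hinv a ▸ hinv b ▸ hf h, fun h => hf h⟩

theorem map_inf_of_involutive (hf : Antitone f) (hinv : Involutive f) (x y : α) :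
    f (x ⊓ y) = f x ⊔ f y :=
  (hf.orderIsoDualOfInvolutive hinv).map_inf x y

theorem map_sup_of_involutive (hf : Antitone f) (hinv : Involutive f) (x y : α) :
    f (x ⊔ y) = f x ⊓ f y :=
  (hf.orderIsoDualOfInvolutive hinv).map_sup x y

end Antitone

theorem stmt_12_general {L : Type*} [Lattice L]
    (tri dtri : L → L)
    (h1 : ∀ x : L, tri (tri x) ≤ x)
    (h2 : ∀ x y : L, x ≤ y → tri y ≤ tri x)
    (h1' : ∀ x : L, x ≤ dtri (dtri x))
    (hneg : ∀ x : L, tri x = dtri x) :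
    ∀ x y : L, tri (x ⊓ y) = tri x ⊔ tri y ∧ tri (x ⊔ y) = tri x ⊓ tri y := by
  have hanti : Antitone tri := fun x y hxy => h2 x y hxy
  have hinv : Involutive tri := fun x =>
    (h1 x).antisymm (by simpa only [hneg] using h1' x)
  exact fun x y => ⟨hanti.map_inf_of_involutive hinv x y, hanti.map_sup_of_involutive hinv x y⟩

/-- A weakly dicomplemented lattice with negation satisfies the de Morgan laws. -/
theorem stmt_12 {L : Type*} [Lattice L] [BoundedOrder L]
    (tri dtri : L → L)
    (h1 : ∀ x : L, tri (tri x) ≤ x)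
    (h2 : ∀ x y : L, x ≤ y → tri y ≤ tri x)
    (h3 : ∀ x y : L, (x ⊓ y) ⊔ (x ⊓ tri y) = x)
    (h1' : ∀ x : L, x ≤ dtri (dtri x))
    (h2' : ∀ x y : L, x ≤ y → dtri y ≤ dtri x)
    (h3' : ∀ x y : L, (x ⊔ y) ⊓ (x ⊔ dtri y) = x)
    (hneg : ∀ x : L, tri x = dtri x) :
    ∀ x y : L, tri (x ⊓ y) = tri x ⊔ tri y ∧ tri (x ⊔ y) = tri x ⊓ tri y :=
  stmt_12_general tri dtri h1 h2 h1' hneg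
end

section
/- In a weakly dicomplemented lattice with negation, the element (x ∧ (y ∨ z))‾ is a complement of (x ∧ y) ∨ (x ∧ z); consequently the lattice is distributive: x ∧ (y ∨ z) = (x ∧ y) ∨ (x ∧ z). -/
/-- In a weakly dicomplemented lattice with negation, `tri (x ⊓ (y ⊔ z))` is a
complement of `(x ⊓ y) ⊔ (x ⊓ z)`; consequently the lattice is distributive. -/
theorem stmt_13 {L : Type*} [Lattice L] [BoundedOrder L]
    (tri dtri : L → L)
    (h1 : ∀ x : L, tri (tri x) ≤ x)
    (h2 : ∀ x y : L, x ≤ y → tri y ≤ tri x)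
    (h3 : ∀ x y : L, (x ⊓ y) ⊔ (x ⊓ tri y) = x)
    (h1' : ∀ x : L, x ≤ dtri (dtri x))
    (h2' : ∀ x y : L, x ≤ y → dtri y ≤ dtri x)
    (h3' : ∀ x y : L, (x ⊔ y) ⊓ (x ⊔ dtri y) = x)
    (hneg : ∀ x : L, tri x = dtri x) :
    ∀ x y z : L, IsCompl ((x ⊓ y) ⊔ (x ⊓ z)) (tri (x ⊓ (y ⊔ z))) ∧
      x ⊓ (y ⊔ z) = (x ⊓ y) ⊔ (x ⊓ z) := by
  -- basic facts
  have invol : ∀ x : L, tri (tri x) = x := by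
    intro x
    refine le_antisymm (h1 x) ?_
    have := h1' x
    rw [hneg, hneg]
    exact this
  have sup_compl : ∀ x : L, x ⊔ tri x = ⊤ := by
    intro x
    have := h3 ⊤ x
    simpa using this
  have inf_compl : ∀ x : L, x ⊓ tri x = ⊥ := by
    intro x
    have := h3' ⊥ x
    rw [← hneg] at this
    simpa using this
  have tri_sup : ∀ y z : L, tri y ⊓ tri z ≤ tri (y ⊔ z) := by
    intro y z
    have hy : y ≤ tri (tri y ⊓ tri z) := by
      have := h2 _ _ (inf_le_left (a := tri y) (b := tri z))
      rwa [invol] at this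
    have hz : z ≤ tri (tri y ⊓ tri z) := by
      have := h2 _ _ (inf_le_right (a := tri y) (b := tri z))
      rwa [invol] at this
    have := h2 _ _ (sup_le hy hz)
    rwa [invol] at this
  intro x y z
  set m := x ⊓ (y ⊔ z) with hm
  set a := (x ⊓ y) ⊔ (x ⊓ z) with ha
  have ham : a ≤ m := by
    apply sup_le
    · exact inf_le_inf_left x le_sup_left
    · exact inf_le_inf_left x le_sup_right
  have hinf : a ⊓ tri m = ⊥ := by
    refine le_antisymm ?_ bot_le
    calc a ⊓ tri m ≤ m ⊓ tri m := inf_le_inf_right _ ham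
    _ = ⊥ := inf_compl m
  -- key: m ≤ a ⊔ tri m
  have key : m ≤ a ⊔ tri m := by
    have e1 : (m ⊓ y) ⊔ (m ⊓ tri y) = m := h3 m y
    have e2 : ((m ⊓ tri y) ⊓ z) ⊔ ((m ⊓ tri y) ⊓ tri z) = m ⊓ tri y := h3 (m ⊓ tri y) z
    have hmy : m ⊓ y ≤ a := by
      have : m ⊓ y ≤ x ⊓ y := inf_le_inf_right y (inf_le_left)
      exact this.trans le_sup_left
    have hmz : (m ⊓ tri y) ⊓ z ≤ a := by
      have : (m ⊓ tri y) ⊓ z ≤ x ⊓ z :=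
        inf_le_inf_right z ((inf_le_left).trans inf_le_left)
      exact this.trans le_sup_right
    have hrest : (m ⊓ tri y) ⊓ tri z ≤ tri m := by
      have h4 : (m ⊓ tri y) ⊓ tri z ≤ tri y ⊓ tri z :=
        inf_le_inf_right _ inf_le_right
      have h5 : tri (y ⊔ z) ≤ tri m := h2 _ _ inf_le_right
      exact h4.trans ((tri_sup y z).trans h5)
    calc m = (m ⊓ y) ⊔ ((m ⊓ tri y ⊓ z) ⊔ (m ⊓ tri y ⊓ tri z)) := by rw [e2, e1]
    _ ≤ a ⊔ (a ⊔ tri m) := by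
        exact sup_le_sup hmy (sup_le_sup hmz hrest)
    _ = a ⊔ tri m := by rw [← sup_assoc, sup_idem]
  have hsup : a ⊔ tri m = ⊤ := by
    refine le_antisymm le_top ?_
    calc (⊤ : L) = m ⊔ tri m := (sup_compl m).symm
    _ ≤ (a ⊔ tri m) ⊔ tri m := sup_le_sup_right key _
    _ = a ⊔ tri m := by rw [sup_assoc, sup_idem]
  have hma : m = a := by
    have := h3' a (tri m)
    rw [hsup, ← hneg, invol, top_inf_eq] at this
    refine le_antisymm ?_ ham
    rw [← this]
    exact le_sup_right
  exact ⟨⟨disjoint_iff.2 hinf, codisjoint_iff.2 hsup⟩, hma⟩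
end

section
/- If L is a weakly dicomplemented lattice with x^△ = x^▽ for all x, then (L, ∧, ∨, ^△, 0, 1) is a Boolean algebra. Conversely, every Boolean algebra with complementation duplicated as both unary operations is a weakly dicomplemented lattice. -/
/-! When `tri = dtri =: n`, the two absorption laws `(x ⊓ y) ⊔ (x ⊓ n y) = x` and
`(x ⊔ y) ⊓ (x ⊔ n y) = x` already force a Boolean algebra. The second gives
`(y ⊔ z) ⊓ n y ≤ z`, so splitting `x ⊓ (y ⊔ z)` along `y` by the first yields
distributivity; instantiating the laws at `⊥` and `⊤` shows that `n x` complements `x`. -/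

section WeakComplement

variable {α : Type*} [Lattice α] {n : α → α}

theorem sup_inf_le_of_dual_split (hdual : ∀ x y : α, (x ⊔ y) ⊓ (x ⊔ n y) = x) (y z : α) :
    (y ⊔ z) ⊓ n y ≤ z :=
  calc (y ⊔ z) ⊓ n y ≤ (z ⊔ y) ⊓ (z ⊔ n y) := inf_le_inf (sup_comm y z).le le_sup_right
    _ = z := hdual z y

theorem inf_sup_left_of_split (hsplit : ∀ x y : α, x ⊓ y ⊔ x ⊓ n y = x)
    (hdual : ∀ x y : α, (x ⊔ y) ⊓ (x ⊔ n y) = x) (x y z : α) :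
    x ⊓ (y ⊔ z) = x ⊓ y ⊔ x ⊓ z := by
  refine le_antisymm ?_ le_inf_sup
  calc x ⊓ (y ⊔ z) = x ⊓ (y ⊔ z) ⊓ y ⊔ x ⊓ (y ⊔ z) ⊓ n y := (hsplit _ y).symm
    _ ≤ x ⊓ y ⊔ x ⊓ z := by
      refine sup_le_sup (inf_le_inf_right y inf_le_left) (le_inf (inf_le_left.trans inf_le_left) ?_)
      calc x ⊓ (y ⊔ z) ⊓ n y ≤ (y ⊔ z) ⊓ n y := inf_le_inf_right _ inf_le_right
        _ ≤ z := sup_inf_le_of_dual_split hdual y z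

theorem isCompl_of_split [BoundedOrder α] (hsplit : ∀ x y : α, x ⊓ y ⊔ x ⊓ n y = x)
    (hdual : ∀ x y : α, (x ⊔ y) ⊓ (x ⊔ n y) = x) (x : α) : IsCompl x (n x) where
  disjoint := disjoint_iff.mpr (by simpa using hdual ⊥ x)
  codisjoint := codisjoint_iff.mpr (by simpa using hsplit ⊤ x)

end WeakComplement

/-- A weakly dicomplemented lattice with negation is a Boolean algebra
(a distributive bounded lattice in which `tri x` complements `x`); conversely,
every Boolean algebra with complementation duplicated as both unary operations
is a weakly dicomplemented lattice. -/
theorem stmt_14 :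
    (∀ (L : Type) [Lattice L] [BoundedOrder L] (tri dtri : L → L),
      (∀ x : L, tri (tri x) ≤ x) →
      (∀ x y : L, x ≤ y → tri y ≤ tri x) →
      (∀ x y : L, (x ⊓ y) ⊔ (x ⊓ tri y) = x) →
      (∀ x : L, x ≤ dtri (dtri x)) →
      (∀ x y : L, x ≤ y → dtri y ≤ dtri x) →
      (∀ x y : L, (x ⊔ y) ⊓ (x ⊔ dtri y) = x) →
      (∀ x : L, tri x = dtri x) →
      (∀ x y z : L, x ⊓ (y ⊔ z) = (x ⊓ y) ⊔ (x ⊓ z)) ∧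
      (∀ x : L, x ⊓ tri x = ⊥ ∧ x ⊔ tri x = ⊤)) ∧
    (∀ (B : Type) [BooleanAlgebra B],
      (∀ x : B, xᶜᶜ ≤ x) ∧
      (∀ x y : B, x ≤ y → yᶜ ≤ xᶜ) ∧
      (∀ x y : B, (x ⊓ y) ⊔ (x ⊓ yᶜ) = x) ∧
      (∀ x : B, x ≤ xᶜᶜ) ∧
      (∀ x y : B, (x ⊔ y) ⊓ (x ⊔ yᶜ) = x)) := by
  refine ⟨fun L _ _ tri dtri _ _ hsplit _ _ hdual htri => ?_, fun B _ => ?_⟩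
  · have hdual' : ∀ x y : L, (x ⊔ y) ⊓ (x ⊔ tri y) = x := fun x y => htri y ▸ hdual x y
    have hcompl := isCompl_of_split hsplit hdual'
    exact ⟨inf_sup_left_of_split hsplit hdual',
      fun x => ⟨(hcompl x).inf_eq_bot, (hcompl x).sup_eq_top⟩⟩
  · refine ⟨fun x => (compl_compl x).le, fun _ _ => compl_le_compl, fun _ _ => sup_inf_inf_compl,
      fun x => (compl_compl x).ge, fun x y => ?_⟩
    rw [← sup_inf_left, inf_compl_eq_bot, sup_bot_eq]
end

section
/- For a weakly dicomplemented lattice L, the set B(L) := {x ∈ L | x^△ = x^▽} is closed under meet, join, ^△ and ^▽, contains 0 and 1, and (B(L), ∧, ∨, ‾, 0, 1) is a Boolean algebra, where x̄ denotes the common value of x^△ and x^▽. -/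
/-- For a weakly dicomplemented lattice `L`, the Boolean part
`B(L) = {x | tri x = dtri x}` contains `⊥, ⊤`, is closed under meet, join,
`tri` and `dtri`, and is a Boolean algebra (distributive and complemented by
the common value of `tri` and `dtri`). -/
theorem stmt_15 {L : Type*} [Lattice L] [BoundedOrder L]
    (tri dtri : L → L)
    (h1 : ∀ x : L, tri (tri x) ≤ x)
    (h2 : ∀ x y : L, x ≤ y → tri y ≤ tri x)
    (h3 : ∀ x y : L, (x ⊓ y) ⊔ (x ⊓ tri y) = x)
    (h1' : ∀ x : L, x ≤ dtri (dtri x))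
    (h2' : ∀ x y : L, x ≤ y → dtri y ≤ dtri x)
    (h3' : ∀ x y : L, (x ⊔ y) ⊓ (x ⊔ dtri y) = x) :
    (⊥ : L) ∈ {x : L | tri x = dtri x} ∧
    (⊤ : L) ∈ {x : L | tri x = dtri x} ∧
    (∀ x ∈ {x : L | tri x = dtri x}, ∀ y ∈ {x : L | tri x = dtri x},
      x ⊓ y ∈ {x : L | tri x = dtri x} ∧ x ⊔ y ∈ {x : L | tri x = dtri x}) ∧
    (∀ x ∈ {x : L | tri x = dtri x},
      tri x ∈ {x : L | tri x = dtri x} ∧ dtri x ∈ {x : L | tri x = dtri x}) ∧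
    (∀ x ∈ {x : L | tri x = dtri x}, x ⊓ tri x = ⊥ ∧ x ⊔ tri x = ⊤) ∧
    (∀ x ∈ {x : L | tri x = dtri x}, ∀ y ∈ {x : L | tri x = dtri x},
      ∀ z ∈ {x : L | tri x = dtri x}, x ⊓ (y ⊔ z) = (x ⊓ y) ⊔ (x ⊓ z)) := by
  -- basic consequences of the axioms
  have jtop : ∀ y : L, y ⊔ tri y = ⊤ := fun y => by
    have := h3 ⊤ y; simpa using this
  have mbot : ∀ y : L, y ⊓ dtri y = ⊥ := fun y => by
    have := h3' ⊥ y; simpa using this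
  have lem1 : ∀ a b : L, a ⊓ b = ⊥ → b ≤ tri a := by
    intro a b hab
    have h := h3 b a
    rw [inf_comm b a, hab, bot_sup_eq] at h
    exact inf_eq_left.mp h
  have lem2 : ∀ a b : L, a ⊔ b = ⊤ → dtri a ≤ b := by
    intro a b hab
    have h := h3' b a
    rw [sup_comm b a, hab, top_inf_eq] at h
    exact sup_eq_left.mp h
  have cmeet : ∀ x : L, tri x = dtri x → x ⊓ tri x = ⊥ := fun x hx => by
    rw [hx]; exact mbot x
  -- (y ⊔ z) ⊓ tri z ≤ y, when z is in the Boolean part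
  have keyA : ∀ y z : L, tri z = dtri z → (y ⊔ z) ⊓ tri z ≤ y := by
    intro y z hz
    calc (y ⊔ z) ⊓ tri z ≤ (y ⊔ z) ⊓ (y ⊔ dtri z) :=
          inf_le_inf_left _ (by rw [hz]; exact le_sup_right)
      _ = y := h3' y z
  have dis : ∀ y z : L, tri y = dtri y → tri z = dtri z →
      (y ⊔ z) ⊓ (tri y ⊓ tri z) = ⊥ := by
    intro y z hy hz
    refine le_bot_iff.mp ?_
    calc (y ⊔ z) ⊓ (tri y ⊓ tri z)
        ≤ y ⊓ tri y := le_inf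
          (le_trans (le_inf inf_le_left (inf_le_right.trans inf_le_right))
            (keyA y z hz))
          (inf_le_right.trans inf_le_left)
      _ = ⊥ := cmeet y hy
  -- complements of the top and bottom
  have tribot : tri (⊥ : L) = ⊤ := by
    have := jtop (⊥ : L); rwa [bot_sup_eq] at this
  have tritop : tri (⊤ : L) = ⊥ := by
    have h := h1 (⊥ : L)
    rw [tribot] at h
    exact le_bot_iff.mp h
  have dtritop : dtri (⊤ : L) = ⊥ := by
    have := mbot (⊤ : L); rwa [top_inf_eq] at this
  have dtribot : dtri (⊥ : L) = ⊤ := by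
    have h := h1' (⊤ : L)
    rw [dtritop] at h
    exact top_le_iff.mp h
  -- double (d)complementation on the Boolean part
  have t2 : ∀ x : L, tri x = dtri x → tri (tri x) = x := fun x hx =>
    le_antisymm (h1 x) (lem1 (tri x) x (by rw [inf_comm]; exact cmeet x hx))
  have d2 : ∀ x : L, tri x = dtri x → dtri (tri x) = x := fun x hx =>
    le_antisymm (lem2 (tri x) x (by rw [sup_comm]; exact jtop x))
      (by rw [hx]; exact h1' x)
  -- tri of a meet (holds in general)
  have trimeet : ∀ x y : L, tri (x ⊓ y) = tri x ⊔ tri y := by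
    intro x y
    refine le_antisymm ?_ (sup_le (h2 _ _ inf_le_left) (h2 _ _ inf_le_right))
    have hle : tri (tri x ⊔ tri y) ≤ x ⊓ y :=
      le_inf ((h2 _ _ le_sup_left).trans (h1 x)) ((h2 _ _ le_sup_right).trans (h1 y))
    exact (h2 _ _ hle).trans (h1 _)
  have dtrimeet : ∀ x y : L, tri x = dtri x → tri y = dtri y →
      dtri (x ⊓ y) = tri x ⊔ tri y := by
    intro x y hx hy
    refine le_antisymm ?_ (sup_le (by rw [hx]; exact h2' _ _ inf_le_left)
      (by rw [hy]; exact h2' _ _ inf_le_right))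
    refine lem2 (x ⊓ y) (tri x ⊔ tri y) (top_le_iff.mp ?_)
    calc (⊤ : L) = x ⊔ tri x := (jtop x).symm
      _ ≤ ((x ⊓ y) ⊔ tri y) ⊔ tri x := by
          refine sup_le_sup_right ?_ _
          calc x = (x ⊓ y) ⊔ (x ⊓ tri y) := (h3 x y).symm
            _ ≤ (x ⊓ y) ⊔ tri y := sup_le_sup_left inf_le_right _
      _ = (x ⊓ y) ⊔ (tri x ⊔ tri y) := by
          rw [sup_assoc, sup_comm (tri y) (tri x)]
  have trijoin : ∀ x y : L, tri x = dtri x → tri y = dtri y →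
      tri (x ⊔ y) = tri x ⊓ tri y := fun x y hx hy =>
    le_antisymm (le_inf (h2 _ _ le_sup_left) (h2 _ _ le_sup_right))
      (lem1 (x ⊔ y) _ (dis x y hx hy))
  have dtrijoin : ∀ x y : L, tri x = dtri x → tri y = dtri y →
      dtri (x ⊔ y) = tri x ⊓ tri y := by
    intro x y hx hy
    refine le_antisymm (le_inf (by rw [hx]; exact h2' _ _ le_sup_left)
      (by rw [hy]; exact h2' _ _ le_sup_right)) ?_
    have hle : x ⊔ y ≤ dtri (dtri x ⊓ dtri y) :=
      sup_le ((h1' x).trans (h2' _ _ inf_le_left))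
        ((h1' y).trans (h2' _ _ inf_le_right))
    calc tri x ⊓ tri y = dtri x ⊓ dtri y := by rw [hx, hy]
      _ ≤ dtri (dtri (dtri x ⊓ dtri y)) := h1' _
      _ ≤ dtri (x ⊔ y) := h2' _ _ hle
  refine ⟨tribot.trans dtribot.symm, tritop.trans dtritop.symm, ?_, ?_, ?_, ?_⟩
  · intro x hx y hy
    exact ⟨(trimeet x y).trans (dtrimeet x y hx hy).symm,
      (trijoin x y hx hy).trans (dtrijoin x y hx hy).symm⟩
  · intro x hx
    refine ⟨(t2 x hx).trans (d2 x hx).symm, ?_⟩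
    show tri (dtri x) = dtri (dtri x)
    rw [← hx]
    exact (t2 x hx).trans (d2 x hx).symm
  · intro x hx
    exact ⟨cmeet x hx, jtop x⟩
  · intro x hx y hy z hz
    refine le_antisymm ?_
      (sup_le (inf_le_inf_left x le_sup_left) (inf_le_inf_left x le_sup_right))
    set a := x ⊓ (y ⊔ z) with ha
    have hay : a ⊓ y ≤ x ⊓ y := inf_le_inf_right y inf_le_left
    have h1z : (a ⊓ tri y) ⊓ z ≤ x ⊓ z :=
      inf_le_inf_right z (inf_le_left.trans inf_le_left)
    have h2z : (a ⊓ tri y) ⊓ tri z ≤ ⊥ := by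
      calc (a ⊓ tri y) ⊓ tri z ≤ y ⊓ tri y :=
            le_inf
              (le_trans
                (le_inf (le_inf (inf_le_left.trans (inf_le_left.trans inf_le_right))
                  inf_le_right |>.trans inf_le_left) inf_le_right)
                (keyA y z hz))
              (inf_le_left.trans inf_le_right)
        _ = ⊥ := cmeet y hy
    calc a = (a ⊓ y) ⊔ (a ⊓ tri y) := (h3 a y).symm
      _ = (a ⊓ y) ⊔ (((a ⊓ tri y) ⊓ z) ⊔ ((a ⊓ tri y) ⊓ tri z)) := by
          rw [h3 (a ⊓ tri y) z]
      _ ≤ (x ⊓ y) ⊔ ((x ⊓ z) ⊔ ⊥) := sup_le_sup hay (sup_le_sup h1z h2z)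
      _ = (x ⊓ y) ⊔ (x ⊓ z) := by rw [sup_bot_eq]
end

section
/- Let L be a weakly dicomplemented lattice, with skeleton L^△ = {x | x^△^△ = x} and dual skeleton L^▽ = {x | x^▽^▽ = x}, and B(L) = {x | x^△ = x^▽}. Then B(L) = L^△ ∩ L^▽ if and only if for all x, x^△^△ = x^▽^▽ implies x^△^▽ = x^▽^△. -/
/-- In a weakly dicomplemented lattice, the Boolean part equals the intersection
of the skeleton and the dual skeleton iff `tri (tri x) = dtri (dtri x)` implies
`dtri (tri x) = tri (dtri x)` for all `x`. -/
theorem stmt_16 {L : Type*} [Lattice L] [BoundedOrder L]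
    (tri dtri : L → L)
    (h1 : ∀ x : L, tri (tri x) ≤ x)
    (h2 : ∀ x y : L, x ≤ y → tri y ≤ tri x)
    (h3 : ∀ x y : L, (x ⊓ y) ⊔ (x ⊓ tri y) = x)
    (h1' : ∀ x : L, x ≤ dtri (dtri x))
    (h2' : ∀ x y : L, x ≤ y → dtri y ≤ dtri x)
    (h3' : ∀ x y : L, (x ⊔ y) ⊓ (x ⊔ dtri y) = x) :
    ({x : L | tri x = dtri x} =
      {x : L | tri (tri x) = x} ∩ {x : L | dtri (dtri x) = x}) ↔
    (∀ x : L, tri (tri x) = dtri (dtri x) → dtri (tri x) = tri (dtri x)) := by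
  -- basic lemmas
  have top : ∀ y : L, y ⊔ tri y = ⊤ := by
    intro y; have := h3 ⊤ y; simpa using this
  have bot : ∀ y : L, y ⊓ dtri y = ⊥ := by
    intro y; have := h3' ⊥ y; simpa using this
  have L4 : ∀ x : L, x ≤ tri (dtri x) := by
    intro x
    have := h3 x (dtri x)
    rw [bot x, bot_sup_eq] at this
    exact le_of_inf_eq this
  have L5 : ∀ x : L, dtri (tri x) ≤ x := by
    intro x
    have := h3' x (tri x)
    rw [top x, top_inf_eq] at this
    exact sup_eq_left.mp this
  have L6 : ∀ x : L, tri (tri (tri x)) = tri x :=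
    fun x => le_antisymm (h1 (tri x)) (h2 _ _ (h1 x))
  have L7 : ∀ x : L, dtri (dtri (dtri x)) = dtri x :=
    fun x => le_antisymm (h2' _ _ (h1' x)) (h1' (dtri x))
  constructor
  · intro hB x hx
    have hyset : tri (tri x) ∈ ({x : L | tri (tri x) = x} ∩ {x : L | dtri (dtri x) = x}) := by
      refine ⟨?_, ?_⟩
      · exact L6 (tri x)
      show dtri (dtri (tri (tri x))) = tri (tri x)
      rw [hx, L7, ← hx]
    rw [← hB] at hyset
    have hty : tri (tri (tri x)) = dtri (tri (tri x)) := hyset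
    rw [L6] at hty
    have hty2 : tri x = dtri x := by
      rw [hty]
      calc dtri (tri (tri x)) = dtri (dtri (dtri x)) := by rw [hx]
        _ = dtri x := L7 x
    rw [hty2]
    calc dtri (dtri x) = tri (tri x) := hx.symm
      _ = tri (dtri x) := by rw [hty2]
  · intro hcond
    ext x
    simp only [Set.mem_setOf_eq, Set.mem_inter_iff]
    constructor
    · intro hx
      constructor
      · refine le_antisymm (h1 x) ?_
        calc x ≤ tri (dtri x) := L4 x
          _ = tri (tri x) := by rw [hx]
      · refine le_antisymm ?_ (h1' x)
        calc dtri (dtri x) = dtri (tri x) := by rw [hx]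
          _ ≤ x := L5 x
    · rintro ⟨ha, hb⟩
      have heq : tri (tri x) = dtri (dtri x) := by rw [ha, hb]
      have hc := hcond x heq
      -- dtri (tri x) = tri (dtri x), and x ≤ tri (dtri x), dtri (tri x) ≤ x
      have h5 : dtri (tri x) = x := le_antisymm (L5 x) (hc ▸ L4 x)
      have h4 : tri (dtri x) = x := hc ▸ h5
      refine le_antisymm ?_ ?_
      · calc tri x = tri (tri (dtri x)) := by rw [h4]
          _ ≤ dtri x := h1 (dtri x)
      · have := h3 (dtri x) x
        rw [inf_comm (dtri x) x, bot x, bot_sup_eq] at this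
        exact le_of_inf_eq this
end

section
/- Let B be a complete atomless (atomfree) Boolean algebra with more than one element. Then there is no formal context (G, M, I) whose concept algebra is isomorphic to B (as a weakly dicomplemented lattice with ^△ = ^▽ = complementation). Specifically, for any join-dense subset G of B, there exist elements h < g in G with 0 < h < g < 1, and then ⋁{x ∈ G | x ≰ h} = 1 ≠ h̄, so the weak negation of h in the induced concept algebra differs from the Boolean complement of h. -/
lemma stmt_18_aux {B : Type*} [CompleteBooleanAlgebra B]
    (G : Set B) (hdense : ∀ b : B, sSup {x | x ∈ G ∧ x ≤ b} = b)
    {c : B} (hc : ⊥ < c) : ∃ x ∈ G, x ≤ c ∧ ⊥ < x := by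
  by_contra hcon
  push_neg at hcon
  have : sSup {x | x ∈ G ∧ x ≤ c} ≤ ⊥ := by
    apply sSup_le
    rintro x ⟨hxG, hxc⟩
    rw [le_bot_iff]
    by_contra hne
    exact hcon x hxG hxc (bot_lt_iff_ne_bot.mpr hne)
  rw [hdense c] at this
  exact absurd (le_antisymm this bot_le) hc.ne'

/-- No concept algebra is a complete atomless Boolean algebra with more than one
element: for any join-dense subset `G` of such an algebra `B`, there are
`h < g` in `G` with `⊥ < h < g < ⊤` such that the weak negation
`⨆ {x ∈ G | x ≰ h} = ⊤` differs from the Boolean complement `hᶜ`. -/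
theorem stmt_18 {B : Type*} [CompleteBooleanAlgebra B] [Nontrivial B]
    (hatomless : ∀ b : B, ⊥ < b → ∃ c : B, ⊥ < c ∧ c < b)
    (G : Set B) (hdense : ∀ b : B, sSup {x | x ∈ G ∧ x ≤ b} = b) :
    ∃ g ∈ G, ∃ h ∈ G, ⊥ < h ∧ h < g ∧ g < ⊤ ∧
      sSup {x | x ∈ G ∧ ¬ x ≤ h} = ⊤ ∧
      sSup {x | x ∈ G ∧ ¬ x ≤ h} ≠ hᶜ := by
  obtain ⟨c, hc0, hc1⟩ := hatomless ⊤ bot_lt_top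
  obtain ⟨g, hgG, hgc, hg0⟩ := stmt_18_aux G hdense hc0
  obtain ⟨d, hd0, hdg⟩ := hatomless g hg0
  obtain ⟨h, hhG, hhd, hh0⟩ := stmt_18_aux G hdense hd0
  have hhg : h < g := lt_of_le_of_lt hhd hdg
  have hg_top : g < ⊤ := lt_of_le_of_lt hgc hc1
  set s := sSup {x | x ∈ G ∧ ¬ x ≤ h} with hs
  have hgs : g ≤ s := le_sSup ⟨hgG, fun hle => absurd (lt_of_lt_of_le hhg hle) (lt_irrefl h)⟩
  have htop : ⊤ ≤ s ⊔ h := by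
    conv_lhs => rw [← hdense ⊤]
    apply sSup_le
    rintro x ⟨hxG, -⟩
    by_cases hxh : x ≤ h
    · exact le_sup_of_le_right hxh
    · exact le_sup_of_le_left (le_sSup ⟨hxG, hxh⟩)
  have hcs : hᶜ ≤ s := by
    calc hᶜ = hᶜ ⊓ (s ⊔ h) := (inf_eq_left.mpr (le_trans le_top htop)).symm
    _ = hᶜ ⊓ s ⊔ hᶜ ⊓ h := inf_sup_left _ _ _
    _ ≤ s := by simp [inf_le_right]
  have hstop : s = ⊤ := by
    apply top_unique
    calc ⊤ = hᶜ ⊔ h := (compl_sup_eq_top).symm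
    _ ≤ s := sup_le hcs (le_trans hhg.le hgs)
  refine ⟨g, hgG, h, hhG, hh0, hhg, hg_top, hstop, ?_⟩
  show s ≠ hᶜ
  rw [hstop]
  intro heq
  have : h = ⊥ := by simpa using (congrArg compl heq).symm
  exact absurd this hh0.ne'
end
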